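/- Let G be a simple bipartite graph on n vertices with bipartition (X, Y), |X| ≥ |Y|, that contains no 4-cycle and has exactly ex(n, {C₃, C₄}) edges. Then |X| ≤ 7, and consequently n ≤ 14. -/

import Mathlib

/-- A graph contains a 4-cycle: vertices `a, b, c, d` with `a ≠ c`, `b ≠ d` and
edges `ab`, `bc`, `cd`, `da` (the remaining distinctness follows from adjacency). -/
def SimpleGraph.HasC4 {V : Type*} (G : SimpleGraph V) : Prop :=
  ∃ a b c d : V, a ≠ c ∧ b ≠ d ∧ G.Adj a b ∧ G.Adj b c ∧ G.Adj c d ∧ G.Adj d a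

/-- `(X, Y)` is a bipartition of the graph `G`. -/
def SimpleGraph.IsBipartitionOf {V : Type*} (G : SimpleGraph V) (X Y : Set V) : Prop :=
  X ∪ Y = Set.univ ∧ Disjoint X Y ∧
    ∀ a b, G.Adj a b → (a ∈ X ∧ b ∈ Y) ∨ (a ∈ Y ∧ b ∈ X)

/-- `ex(n, {C₃, C₄})`: the maximum number of edges of a simple graph on `n` vertices
containing neither a triangle nor a 4-cycle as a subgraph. -/
noncomputable def exC3C4 (n : ℕ) : ℕ :=
  sSup {m : ℕ | ∃ G : SimpleGraph (Fin n),
    G.CliqueFree 3 ∧ ¬ G.HasC4 ∧ G.edgeSet.ncard = m}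

/-- `z(n, C₄)`: the maximum number of edges of a simple bipartite graph on `n` vertices
containing no 4-cycle as a subgraph. -/
noncomputable def zC4 (n : ℕ) : ℕ :=
  sSup {m : ℕ | ∃ G : SimpleGraph (Fin n), (∃ X Y, G.IsBipartitionOf X Y) ∧
    ¬ G.HasC4 ∧ G.edgeSet.ncard = m}


/-!
Being bipartite, `G` is triangle-free, so `G` has the maximum number of edges among
`{C₃, C₄}`-free graphs on its vertices. Two vertices on the same side must then have a common
neighbour, for otherwise the edge joining them could be added. No vertex `w` has four
neighbours `a, b, c, d`: replacing the edges `wb`, `wc` by the path `a - b - c - d` would give a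
`{C₃, C₄}`-free graph with one more edge. In both modifications the new edges lie inside one side
of the bipartition, so a triangle or 4-cycle through them would need either an odd path between
two vertices of that side, or a common old neighbour of two vertices joined by a new path of
length at most two; in the second modification such a neighbour could only be `w`, the unique
common neighbour of any two of its neighbours, and `w` has lost `b` and `c`.

Now fix `x ∈ X`: every other vertex of `X` is a neighbour of one of the at most three neighbours
of `x`, each of which has at most two neighbours besides `x`. Hence `|X| ≤ 1 + 3 · 2 = 7`, and
likewise `|Y| ≤ 7`.
-/

namespace SimpleGraph

variable {V : Type*}

section Bipartite

variable {G H : SimpleGraph V} {A B : Set V} {u v : V}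

theorem IsBipartitionOf.isBipartiteWith (h : G.IsBipartitionOf A B) : G.IsBipartiteWith A B :=
  ⟨h.2.1, h.2.2⟩

theorem IsBipartiteWith.mono_left (h : G.IsBipartiteWith A B) (hle : H ≤ G) :
    H.IsBipartiteWith A B :=
  ⟨h.disjoint, fun _ _ huv ↦ h.mem_of_adj (hle huv)⟩

theorem IsBipartiteWith.not_adj_of_mem_left (h : G.IsBipartiteWith A B) (hu : u ∈ A)
    (hv : v ∈ A) : ¬ G.Adj u v :=
  fun huv ↦ Set.disjoint_left.mp h.disjoint hv (h.mem_of_mem_adj hu huv)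

theorem IsBipartiteWith.cliqueFree_three (h : G.IsBipartiteWith A B) : G.CliqueFree 3 :=
  h.isBipartite.cliqueFree (by norm_num)

end Bipartite

section C4

variable {G H : SimpleGraph V} {u v y z : V}

theorem HasC4.mono (hle : G ≤ H) : G.HasC4 → H.HasC4 := by
  rintro ⟨a, b, c, d, hac, hbd, hab, hbc, hcd, hda⟩
  exact ⟨a, b, c, d, hac, hbd, hle hab, hle hbc, hle hcd, hle hda⟩

theorem eq_of_not_hasC4 (hC4 : ¬ G.HasC4) (huv : u ≠ v) (huy : G.Adj u y) (hvy : G.Adj v y)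
    (huz : G.Adj u z) (hvz : G.Adj v z) : y = z := by
  by_contra hyz
  exact hC4 ⟨u, y, v, z, huv, hyz, huy, hvy.symm, hvz, huz.symm⟩

end C4

def C3C4Free (G : SimpleGraph V) : Prop :=
  G.CliqueFree 3 ∧ ¬ G.HasC4

section Sup

variable {O N : SimpleGraph V} {A B : Set V}

theorem cliqueFree_three_sup (hO : O.IsBipartiteWith A B) (hNA : ∀ ⦃u v⦄, N.Adj u v → u ∈ A)
    (hN : N.CliqueFree 3) (hcommon : ∀ ⦃u v y⦄, N.Adj u v → O.Adj u y → O.Adj v y → False) :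
    (O ⊔ N).CliqueFree 3 := by
  classical
  intro t ht
  obtain ⟨a, b, c, hab, hac, hbc, rfl⟩ := is3Clique_iff.mp ht
  have hOA : ∀ ⦃u v⦄, u ∈ A → v ∈ A → ¬ O.Adj u v := fun _ _ ↦ hO.not_adj_of_mem_left
  rw [sup_adj] at hab hac hbc
  rcases hab with hab | hab <;> rcases hac with hac | hac <;> rcases hbc with hbc | hbc
  · exact hO.cliqueFree_three _ (is3Clique_triple_iff.mpr ⟨hab, hac, hbc⟩)
  · exact hcommon hbc hab.symm hac.symm
  · exact hcommon hac hab hbc.symm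
  · exact hOA (hNA hac) (hNA hbc) hab
  · exact hcommon hab hac hbc
  · exact hOA (hNA hab) (hNA hbc.symm) hac
  · exact hOA (hNA hab.symm) (hNA hac.symm) hbc
  · exact hN _ (is3Clique_triple_iff.mpr ⟨hab, hac, hbc⟩)

theorem not_hasC4_sup (hO : O.IsBipartiteWith A B) (hO4 : ¬ O.HasC4)
    (hNA : ∀ ⦃u v⦄, N.Adj u v → u ∈ A) (hN : ¬ N.HasC4)
    (hcommon : ∀ ⦃u z v y⦄, u ≠ v → N.Adj u z → N.Adj z v → O.Adj u y → O.Adj v y → False) :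
    ¬ (O ⊔ N).HasC4 := by
  rintro ⟨a, b, c, d, hac, hbd, hab, hbc, hcd, hda⟩
  have hOA : ∀ ⦃u v⦄, u ∈ A → v ∈ A → ¬ O.Adj u v := fun _ _ ↦ hO.not_adj_of_mem_left
  have hNA' : ∀ ⦃u v⦄, N.Adj u v → v ∈ A := fun _ _ h ↦ hNA h.symm
  have hodd : ∀ ⦃u v x y⦄, u ∈ A → O.Adj u v → O.Adj v x → O.Adj x y → y ∉ A :=
    fun _ _ _ _ hu huv hvx hxy ↦ Set.disjoint_left.mp hO.disjoint.symm
      (hO.mem_of_mem_adj (hO.symm.mem_of_mem_adj (hO.mem_of_mem_adj hu huv) hvx) hxy)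
  rw [sup_adj] at hab hbc hcd hda
  rcases hab with hab | hab <;> rcases hbc with hbc | hbc <;> rcases hcd with hcd | hcd <;>
    rcases hda with hda | hda
  all_goals first
    | exact hO4 ⟨a, b, c, d, hac, hbd, hab, hbc, hcd, hda⟩
    | exact hN ⟨a, b, c, d, hac, hbd, hab, hbc, hcd, hda⟩
    | exact hcommon hac hab hbc hda.symm hcd
    | exact hcommon hbd hbc hcd hab.symm hda
    | exact hcommon hac.symm hcd hda hbc.symm hab
    | exact hcommon hbd.symm hda hab hcd.symm hbc
    | exact hOA (hNA' hda) (hNA hbc) hab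
    | exact hOA (hNA' hab) (hNA hcd) hbc
    | exact hOA (hNA' hbc) (hNA hda) hcd
    | exact hOA (hNA' hcd) (hNA hab) hda
    | exact hodd (hNA' hab) hbc hcd hda (hNA hab)
    | exact hodd (hNA' hbc) hcd hda hab (hNA hbc)
    | exact hodd (hNA' hcd) hda hab hbc (hNA hcd)
    | exact hodd (hNA' hda) hab hbc hcd (hNA hda)

end Sup

theorem cliqueFree_three_edge (a b : V) : (edge a b).CliqueFree 3 := by
  classical
  intro t ht
  obtain ⟨x, y, z, hxy, hxz, hyz, -⟩ := is3Clique_iff.mp ht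
  rw [edge_adj] at hxy hxz hyz
  grind

theorem not_hasC4_edge (a b : V) : ¬ (edge a b).HasC4 := by
  rintro ⟨p, q, r, s, hpr, -, hpq, hqr, -, -⟩
  rw [edge_adj] at hpq hqr
  grind

theorem cliqueFree_three_path {a b c d : V} (had : a ≠ d) :
    (edge a b ⊔ edge b c ⊔ edge c d).CliqueFree 3 := by
  classical
  intro t ht
  obtain ⟨x, y, z, hxy, hxz, hyz, -⟩ := is3Clique_iff.mp ht
  simp only [sup_adj, edge_adj] at hxy hxz hyz
  grind

-- a 4-cycle has four distinct edges
theorem not_hasC4_path (a b c d : V) : ¬ (edge a b ⊔ edge b c ⊔ edge c d).HasC4 := by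
  rintro ⟨p, q, r, s, hpr, hqs, hpq, hqr, hrs, hsp⟩
  simp only [sup_adj, edge_adj] at hpq hqr hrs hsp
  grind

theorem ncard_edgeSet_sup_edge [Finite V] {G : SimpleGraph V} {s t : V} (hn : ¬ G.Adj s t)
    (h : s ≠ t) : (G ⊔ edge s t).edgeSet.ncard = G.edgeSet.ncard + 1 := by
  rw [edgeSet_sup, edgeSet_edge_of_ne h, Set.union_singleton,
    Set.ncard_insert_of_notMem (by rwa [mem_edgeSet])]

section Surgery

variable {G : SimpleGraph V} {A B : Set V} {w a b c d : V}

theorem c3c4Free_deleteEdges_sup_path (hbip : G.IsBipartiteWith A B) (hC4 : ¬ G.HasC4)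
    (hw : w ∈ B) (ha : G.Adj w a) (hb : G.Adj w b) (hc : G.Adj w c) (hd : G.Adj w d)
    (had : a ≠ d) (hbc : b ≠ c) :
    C3C4Free (G.deleteEdges {s(w, b), s(w, c)} ⊔ (edge a b ⊔ edge b c ⊔ edge c d)) := by
  set O := G.deleteEdges {s(w, b), s(w, c)}
  set N := edge a b ⊔ edge b c ⊔ edge c d
  have hOG : O ≤ G := deleteEdges_le _
  have hO : O.IsBipartiteWith A B := hbip.mono_left hOG
  have hcommon : ∀ ⦃u v y⦄, u ≠ v → G.Adj w u → G.Adj w v → (u = b ∨ u = c ∨ v = b ∨ v = c) →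
      O.Adj u y → O.Adj v y → False := by
    intro u v y huv hu hv hinner huy hvy
    obtain rfl := eq_of_not_hasC4 hC4 huv (hOG huy) (hOG hvy) hu.symm hv.symm
    simp only [O, deleteEdges_adj, Set.mem_insert_iff, Set.mem_singleton_iff, Sym2.eq_iff]
      at huy hvy
    grind
  have hNw : ∀ ⦃u v⦄, N.Adj u v → G.Adj w u := by
    intro u v h
    simp only [N, sup_adj, edge_adj] at h
    grind
  have hN1 : ∀ ⦃u v⦄, N.Adj u v → u = b ∨ u = c ∨ v = b ∨ v = c := by
    intro u v h
    simp only [N, sup_adj, edge_adj] at h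
    grind
  have hN2 : ∀ ⦃u z v⦄, u ≠ v → N.Adj u z → N.Adj z v → u = b ∨ u = c ∨ v = b ∨ v = c := by
    intro u z v huv huz hzv
    simp only [N, sup_adj, edge_adj] at huz hzv
    grind
  have hNA : ∀ ⦃u v⦄, N.Adj u v → u ∈ A := fun _ _ h ↦ hbip.symm.mem_of_mem_adj hw (hNw h)
  exact ⟨cliqueFree_three_sup hO hNA (cliqueFree_three_path had)
      fun u v y huv ↦ hcommon huv.ne (hNw huv) (hNw huv.symm) (hN1 huv),
    not_hasC4_sup hO (fun h ↦ hC4 (h.mono hOG)) hNA (not_hasC4_path a b c d)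
      fun u z v y huv huz hzv ↦ hcommon huv (hNw huz) (hNw hzv.symm) (hN2 huv huz hzv)⟩

theorem ncard_edgeSet_deleteEdges_sup_path [Finite V] (hbip : G.IsBipartiteWith A B)
    (hw : w ∈ B) (ha : G.Adj w a) (hb : G.Adj w b) (hc : G.Adj w c) (hd : G.Adj w d)
    (hab : a ≠ b) (hac : a ≠ c) (hbc : b ≠ c) (hbd : b ≠ d) (hcd : c ≠ d) :
    (G.deleteEdges {s(w, b), s(w, c)} ⊔ (edge a b ⊔ edge b c ⊔ edge c d)).edgeSet.ncard =
      G.edgeSet.ncard + 1 := by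
  have hA := fun {u} (hu : G.Adj w u) ↦ hbip.symm.mem_of_mem_adj hw hu
  have hOA : ∀ ⦃u v⦄, G.Adj w u → G.Adj w v → ¬ (G.deleteEdges {s(w, b), s(w, c)}).Adj u v :=
    fun _ _ hu hv h ↦ hbip.not_adj_of_mem_left (hA hu) (hA hv) (deleteEdges_le _ h)
  rw [← sup_assoc, ← sup_assoc, ncard_edgeSet_sup_edge, ncard_edgeSet_sup_edge,
    ncard_edgeSet_sup_edge, edgeSet_deleteEdges]
  · have hsub : {s(w, b), s(w, c)} ⊆ G.edgeSet := by
      simp [Set.insert_subset_iff, hb, hc]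
    have := Set.ncard_sdiff_add_ncard_of_subset hsub
    rw [Set.ncard_pair (mt Sym2.congr_right.mp hbc)] at this
    omega
  all_goals try simp only [sup_adj, edge_adj, not_or]
  all_goals grind

end Surgery

section Extremal

variable [Fintype V] {G : SimpleGraph V} [DecidableRel G.Adj] {A B : Set V}

open Finset

theorem IsExtremal.ncard_edgeSet_le {p : SimpleGraph V → Prop} (hG : G.IsExtremal p)
    {H : SimpleGraph V} (hH : p H) : H.edgeSet.ncard ≤ G.edgeSet.ncard := by
  classical
  rw [Set.ncard_eq_toFinset_card', Set.ncard_eq_toFinset_card']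
  exact hG.2 hH

theorem IsExtremal.exists_common_adj (hG : G.IsExtremal C3C4Free)
    (hbip : G.IsBipartiteWith A B) {u v : V} (hu : u ∈ A) (hv : v ∈ A) (huv : u ≠ v) :
    ∃ y, G.Adj u y ∧ G.Adj v y := by
  by_contra! hnone
  have hNA : ∀ ⦃x y⦄, (edge u v).Adj x y → x ∈ A := by
    intro x y h
    rw [edge_adj] at h
    grind
  have hH : C3C4Free (G ⊔ edge u v) := by
    refine ⟨cliqueFree_three_sup hbip hNA (cliqueFree_three_edge u v) ?_,
      not_hasC4_sup hbip hG.prop.2 hNA (not_hasC4_edge u v) ?_⟩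
    · intro x y z hxy hxz hyz
      rw [edge_adj] at hxy
      rcases hxy with ⟨⟨rfl, rfl⟩ | ⟨rfl, rfl⟩, -⟩
      · exact hnone z hxz hyz
      · exact hnone z hyz hxz
    · intro x z y _ hxy hxz hzy
      rw [edge_adj] at hxz hzy
      grind
  have := hG.ncard_edgeSet_le hH
  rw [ncard_edgeSet_sup_edge (hbip.not_adj_of_mem_left hu hv) huv] at this
  omega

theorem IsExtremal.degree_le_three (hG : G.IsExtremal C3C4Free)
    (hbip : G.IsBipartiteWith A B) {w : V} (hw : w ∈ B) : G.degree w ≤ 3 := by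
  classical
  by_contra! h
  obtain ⟨a, ha⟩ : (G.neighborFinset w).Nonempty := by
    rw [← card_pos, card_neighborFinset_eq_degree]
    omega
  obtain ⟨b, c, d, hb, hc, hd, hbc, hbd, hcd⟩ :=
    (two_lt_card_iff (s := (G.neighborFinset w).erase a)).mp (by
      rw [card_erase_of_mem ha, card_neighborFinset_eq_degree]
      omega)
  simp only [mem_erase, mem_neighborFinset] at ha hb hc hd
  have hfree := c3c4Free_deleteEdges_sup_path hbip hG.prop.2 hw ha hb.2 hc.2 hd.2 hd.1.symm hbc
  have hmore := hG.ncard_edgeSet_le hfree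
  rw [ncard_edgeSet_deleteEdges_sup_path hbip hw ha hb.2 hc.2 hd.2 hb.1.symm hc.1.symm
    hbc hbd hcd] at hmore
  omega

theorem IsExtremal.ncard_le_seven (hG : G.IsExtremal C3C4Free)
    (hbip : G.IsBipartiteWith A B) : A.ncard ≤ 7 := by
  classical
  obtain rfl | ⟨x, hx⟩ := A.eq_empty_or_nonempty
  · simp
  have hcover : A.toFinset ⊆
      insert x ((G.neighborFinset x).biUnion fun y ↦ (G.neighborFinset y).erase x) := by
    intro v hv
    rw [Set.mem_toFinset] at hv
    obtain rfl | hvx := eq_or_ne v x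
    · exact mem_insert_self _ _
    obtain ⟨y, hxy, hvy⟩ := hG.exists_common_adj hbip hx hv hvx.symm
    simp only [mem_insert, mem_biUnion, mem_erase, mem_neighborFinset]
    exact Or.inr ⟨y, hxy, hvx, hvy.symm⟩
  calc A.ncard = #A.toFinset := Set.ncard_eq_toFinset_card' A
    _ ≤ #((G.neighborFinset x).biUnion fun y ↦ (G.neighborFinset y).erase x) + 1 :=
      (card_le_card hcover).trans (card_insert_le _ _)
    _ ≤ ∑ y ∈ G.neighborFinset x, #((G.neighborFinset y).erase x) + 1 := by
      gcongr
      exact card_biUnion_le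
    _ ≤ ∑ _y ∈ G.neighborFinset x, 2 + 1 := by
      gcongr with y hy
      rw [mem_neighborFinset] at hy
      rw [card_erase_of_mem ((mem_neighborFinset _ _ _).mpr hy.symm),
        card_neighborFinset_eq_degree]
      have := hG.degree_le_three hbip (hbip.mem_of_mem_adj hx hy)
      omega
    _ ≤ 7 := by
      rw [sum_const, smul_eq_mul, card_neighborFinset_eq_degree]
      have := hG.degree_le_three hbip.symm hx
      omega

end Extremal

theorem isExtremal_of_ncard_edgeSet_eq_exC3C4 {n : ℕ} {G : SimpleGraph (Fin n)}
    [DecidableRel G.Adj] (hG : C3C4Free G) (h : G.edgeSet.ncard = exC3C4 n) :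
    G.IsExtremal C3C4Free := by
  refine ⟨hG, fun H _ hH ↦ ?_⟩
  simp only [← Set.ncard_coe_finset, coe_edgeFinset, h]
  refine le_csSup ⟨Nat.card (Sym2 (Fin n)), ?_⟩ ⟨H, hH.1, hH.2, rfl⟩
  rintro m ⟨H', -, -, rfl⟩
  exact Set.ncard_le_card _

end SimpleGraph

theorem statement6_general {n : ℕ} (G : SimpleGraph (Fin n)) (X Y : Set (Fin n))
    (hbip : G.IsBipartitionOf X Y) (hC4 : ¬ G.HasC4)
    (hext : G.edgeSet.ncard = exC3C4 n) :
    X.ncard ≤ 7 ∧ n ≤ 14 := by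
  classical
  have hXY := hbip.isBipartiteWith
  have hG : G.IsExtremal SimpleGraph.C3C4Free :=
    SimpleGraph.isExtremal_of_ncard_edgeSet_eq_exC3C4 ⟨hXY.cliqueFree_three, hC4⟩ hext
  have hX := hG.ncard_le_seven hXY
  have hY := hG.ncard_le_seven hXY.symm
  have hn : n ≤ X.ncard + Y.ncard := by
    simpa [hbip.1] using Set.ncard_union_le X Y
  exact ⟨hX, by omega⟩

/-- If `G` is a bipartite graph on `n` vertices with bipartition `(X, Y)`, `|X| ≥ |Y|`,
containing no 4-cycle, and with exactly `ex(n, {C₃, C₄})` edges, then `|X| ≤ 7` and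
consequently `n ≤ 14`. -/
theorem statement6 {n : ℕ} (G : SimpleGraph (Fin n)) (X Y : Set (Fin n))
    (hbip : G.IsBipartitionOf X Y) (hXY : Y.ncard ≤ X.ncard) (hC4 : ¬ G.HasC4)
    (hext : G.edgeSet.ncard = exC3C4 n) :
    X.ncard ≤ 7 ∧ n ≤ 14 :=
  statement6_general G X Y hbip hC4 hext
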